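/- With notation as in the multilinear theorem, define β_m(p) = inf { Θ_m(p₁,…,pₘ) ∏ⱼ ψⱼ(pⱼ)‖fⱼ‖_{Gψⱼ} : ∑ 1/pⱼ = 1/p, pⱼ ∈ (aⱼ,bⱼ) }. Then for every p ≥ 1 with β_m(p) < ∞, ‖M(f₁,…,fₘ)‖_{L^p(ℝ₊)} ≤ β_m(p); equivalently, sup_{p : β_m(p)<∞} ‖M(f⃗)‖_p/β_m(p) ≤ 1, i.e. ‖M(f⃗)‖_{Gβ_m} ≤ 1. -/

import Mathlib

/-!
Substituting `xs = x • t` and using the homogeneity of `Q` writes `M(f⃗)(x)` as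
`∫ Q(1,t) ∏ fⱼ(x tⱼ) dt`. Minkowski's integral inequality moves the `L^q` norm in `x` inside
the `t`-integral; for fixed `t`, Hölder's inequality with `∑ 1/pⱼ = 1/q` and the dilation
`‖fⱼ(· tⱼ)‖_{pⱼ} = tⱼ^{-1/pⱼ} ‖fⱼ‖_{pⱼ}` leave exactly the weight integrated in `Θ_m(p⃗)`.
Hence `‖M(f⃗)‖_q ≤ Θ_m(p⃗) ∏ ‖fⱼ‖_{pⱼ} ≤ Θ_m(p⃗) ∏ ψⱼ(pⱼ) ‖fⱼ‖_{Gψⱼ}` for every admissible `p⃗`.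
-/

open MeasureTheory ENNReal Set

/-- Lebesgue measure restricted to `(0,∞)`. -/
noncomputable def muHalf : Measure ℝ := (volume : Measure ℝ).restrict (Ioi 0)

/-- The product measure on `ℝ₊^m`. -/
noncomputable def piHalf (m : ℕ) : Measure (Fin m → ℝ) :=
  Measure.pi fun _ => muHalf

/-- `Θ_m(p⃗) = ∫_{ℝ₊^m} |Q(1,x⃗)| ∏ xⱼ^{-1/pⱼ} dx⃗`. -/
noncomputable def Theta (m : ℕ) (Q : ℝ → (Fin m → ℝ) → ℝ) (p : Fin m → ℝ) : ℝ≥0∞ :=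
  ∫⁻ xs, ENNReal.ofReal (|Q 1 xs| * ∏ j, (xs j) ^ (-(1 / p j))) ∂(piHalf m)

/-- The Grand Lebesgue norm `‖f‖_{Gψ} = sup_{p ∈ (a,b)} ‖f‖_{L^p(μ)}/ψ(p)`. -/
noncomputable def grandNorm {Ω : Type*} [MeasurableSpace Ω] (μ : Measure Ω)
    (a : ℝ) (b : ℝ≥0∞) (ψ : ℝ → ℝ) (f : Ω → ℝ) : ℝ≥0∞ :=
  ⨆ p : {p : ℝ // a < p ∧ (ENNReal.ofReal p) < b},
    eLpNorm f (ENNReal.ofReal p.1) μ / ENNReal.ofReal (ψ p.1)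

/-- `β_m(p) = inf { Θ_m(p⃗) ∏ⱼ ψⱼ(pⱼ)‖fⱼ‖_{Gψⱼ} : ∑ 1/pⱼ = 1/p, pⱼ ∈ (aⱼ,bⱼ) }`. -/
noncomputable def betaFun (m : ℕ) (Q : ℝ → (Fin m → ℝ) → ℝ)
    (a : Fin m → ℝ) (b : Fin m → ℝ≥0∞) (ψ : Fin m → ℝ → ℝ)
    (f : Fin m → ℝ → ℝ) (q : ℝ) : ℝ≥0∞ :=
  ⨅ p : {p : Fin m → ℝ //
      (∀ j, a j < p j ∧ (ENNReal.ofReal (p j)) < b j) ∧ ∑ j, 1 / p j = 1 / q},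
    Theta m Q p.1 * ∏ j,
      ENNReal.ofReal (ψ j (p.1 j)) * grandNorm muHalf (a j) (b j) (ψ j) (f j)

instance : SigmaFinite muHalf := by unfold muHalf; infer_instance

instance (m : ℕ) : SigmaFinite (piHalf m) := by unfold piHalf; infer_instance

theorem lintegral_comp_smul_restrict_of_preimage_eq {E : Type*} [NormedAddCommGroup E]
    [NormedSpace ℝ E] [MeasurableSpace E] [BorelSpace E] [FiniteDimensional ℝ E]
    (μ : Measure E) [μ.IsAddHaarMeasure] {s : Set E} (hs : MeasurableSet s) {c : ℝ}
    (hc : c ≠ 0) (hcs : (c • ·) ⁻¹' s = s) {g : E → ℝ≥0∞} (hg : Measurable g) :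
    ∫⁻ x in s, g (c • x) ∂μ
      = ENNReal.ofReal |(c ^ Module.finrank ℝ E)⁻¹| * ∫⁻ x in s, g x ∂μ := by
  rw [← lintegral_map hg (measurable_const_smul c), ← hcs,
    ← Measure.restrict_map (measurable_const_smul c) hs, Measure.map_addHaar_smul μ hc, hcs,
    Measure.restrict_smul, lintegral_smul_measure, smul_eq_mul]

theorem lintegral_muHalf_comp_mul {c : ℝ} (hc : 0 < c) {g : ℝ → ℝ≥0∞} (hg : Measurable g) :
    ∫⁻ y, g (c * y) ∂muHalf = ENNReal.ofReal c⁻¹ * ∫⁻ y, g y ∂muHalf := by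
  have hcs : (c • ·) ⁻¹' Ioi (0 : ℝ) = Ioi 0 := by
    ext y; simp [smul_eq_mul, mul_pos_iff_of_pos_left hc]
  simpa [muHalf, abs_of_pos hc] using lintegral_comp_smul_restrict_of_preimage_eq volume
    measurableSet_Ioi hc.ne' hcs hg

theorem piHalf_eq_restrict (m : ℕ) :
    piHalf m = volume.restrict (univ.pi fun _ : Fin m => Ioi (0 : ℝ)) := by
  rw [volume_pi, Measure.restrict_pi_pi]; rfl

theorem lintegral_piHalf_comp_smul (m : ℕ) {c : ℝ} (hc : 0 < c) {g : (Fin m → ℝ) → ℝ≥0∞}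
    (hg : Measurable g) :
    ∫⁻ t, g (c • t) ∂(piHalf m) = ENNReal.ofReal (c ^ m)⁻¹ * ∫⁻ t, g t ∂(piHalf m) := by
  have hcs : (c • ·) ⁻¹' (univ.pi fun _ : Fin m => Ioi (0 : ℝ)) = univ.pi fun _ => Ioi 0 := by
    ext t; simp [smul_eq_mul, mul_pos_iff_of_pos_left hc]
  simpa [abs_of_pos hc, piHalf_eq_restrict] using lintegral_comp_smul_restrict_of_preimage_eq
    volume (MeasurableSet.univ_pi fun _ => measurableSet_Ioi) hc.ne' hcs hg

theorem ENNReal.le_rpow_of_le_mul_rpow {I R : ℝ≥0∞} {p q : ℝ} (hpq : p.HolderConjugate q)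
    (hI : I ≠ ∞) (h : I ≤ R * I ^ (1 / q)) : I ≤ R ^ p := by
  rcases eq_or_ne I 0 with rfl | hI0
  · exact zero_le
  have hsplit : I = I ^ (1 / p) * I ^ (1 / q) := by
    rw [← ENNReal.rpow_add_of_nonneg _ _ hpq.one_div_nonneg hpq.symm.one_div_nonneg, one_div,
      one_div, hpq.inv_add_inv_eq_one, ENNReal.rpow_one]
  have hroot : I ^ (1 / p) ≤ R := by
    refine (ENNReal.mul_le_mul_iff_left ?_ ?_).1 (by rwa [← hsplit])
    · simp [hI0, hI, hpq.symm.pos]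
    · exact ENNReal.rpow_ne_top_of_nonneg hpq.symm.one_div_nonneg hI
  calc I = (I ^ (1 / p)) ^ p := by
        rw [← ENNReal.rpow_mul, one_div_mul_cancel hpq.ne_zero, ENNReal.rpow_one]
    _ ≤ R ^ p := ENNReal.rpow_le_rpow hroot hpq.nonneg

section Minkowski

variable {α β : Type*} [MeasurableSpace α] [MeasurableSpace β] {μ : Measure α} {ν : Measure β}

theorem lintegral_le_of_forall_le_of_lintegral_ne_top [SigmaFinite μ] {f : α → ℝ≥0∞}
    (hf : Measurable f) {C : ℝ≥0∞}
    (h : ∀ g : α → ℝ≥0∞, Measurable g → g ≤ f → ∫⁻ x, g x ∂μ ≠ ∞ → ∫⁻ x, g x ∂μ ≤ C) :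
    ∫⁻ x, f x ∂μ ≤ C := by
  set g : ℕ → α → ℝ≥0∞ := fun n => (spanningSets μ n).indicator fun x => min (f x) n
  have hg_meas n : Measurable (g n) :=
    (hf.min measurable_const).indicator (measurableSet_spanningSets μ n)
  have hg_le n : g n ≤ f := fun x =>
    (indicator_le_self _ _ x).trans (min_le_left _ _)
  have hg_mono : Monotone g := fun i j hij x =>
    (indicator_le_indicator_of_subset (spanningSets_mono hij) (fun _ => zero_le) x).trans
      (indicator_le_indicator (min_le_min_left _ (Nat.cast_le.2 hij)))
  have hg_fin n : ∫⁻ x, g n x ∂μ ≠ ∞ := by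
    refine ne_top_of_le_ne_top ?_ (lintegral_mono fun x =>
      indicator_le_indicator (s := spanningSets μ n) (g := fun _ => (n : ℝ≥0∞))
        (min_le_right (f x) n))
    rw [lintegral_indicator_const (measurableSet_spanningSets μ n)]
    exact ENNReal.mul_ne_top (ENNReal.natCast_ne_top n) (measure_spanningSets_lt_top μ n).ne
  have hg_sup x : ⨆ n, g n x = f x := by
    refine le_antisymm (iSup_le fun n => hg_le n x) ?_
    obtain ⟨N, hN⟩ := (eventually_mem_spanningSets μ x).exists_forall_of_atTop
    calc f x = ⨆ k : ℕ, min (f x) k := by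
          rw [← inf_iSup_eq, ENNReal.iSup_natCast, inf_top_eq]
      _ ≤ ⨆ n, g n x := iSup_le fun k => le_iSup_of_le (max k N) <| by
          rw [show g (max k N) x = min (f x) (max k N : ℕ) from
            indicator_of_mem (hN _ (le_max_right k N)) _]
          exact min_le_min_left _ (Nat.cast_le.2 (le_max_left k N))
  calc ∫⁻ x, f x ∂μ = ∫⁻ x, ⨆ n, g n x ∂μ := by simp_rw [hg_sup]
    _ = ⨆ n, ∫⁻ x, g n x ∂μ := lintegral_iSup hg_meas hg_mono
    _ ≤ C := iSup_le fun n => h _ (hg_meas n) (hg_le n) (hg_fin n)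

theorem lintegral_rpow_le_of_le_lintegral [SFinite μ] [SFinite ν] {F : α → β → ℝ≥0∞}
    (hF : Measurable (Function.uncurry F)) {p q : ℝ} (hpq : p.HolderConjugate q)
    {h : α → ℝ≥0∞} (hh : Measurable h) (hle : ∀ x, h x ≤ ∫⁻ t, F x t ∂ν)
    (hfin : ∫⁻ x, h x ^ p ∂μ ≠ ∞) :
    ∫⁻ x, h x ^ p ∂μ ≤ (∫⁻ t, (∫⁻ x, F x t ^ p ∂μ) ^ (1 / p) ∂ν) ^ p := by
  refine ENNReal.le_rpow_of_le_mul_rpow hpq hfin ?_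
  have hsplit x : h x ^ p = h x ^ (p - 1) * h x := by
    conv_lhs => rw [← sub_add_cancel p 1]
    rw [ENNReal.rpow_add_of_nonneg _ _ hpq.sub_one_pos.le zero_le_one, ENNReal.rpow_one]
  have hconj x : (h x ^ (p - 1)) ^ q = h x ^ p := by
    rw [← ENNReal.rpow_mul, hpq.sub_one_mul_conj]
  have hR : Measurable fun t => (∫⁻ x, F x t ^ p ∂μ) ^ (1 / p) :=
    ((hF.pow_const p).lintegral_prod_left').pow_const _
  calc ∫⁻ x, h x ^ p ∂μ = ∫⁻ x, h x ^ (p - 1) * h x ∂μ := lintegral_congr hsplit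
    _ ≤ ∫⁻ x, h x ^ (p - 1) * ∫⁻ t, F x t ∂ν ∂μ :=
        lintegral_mono fun x => mul_le_mul_right (hle x) _
    _ = ∫⁻ x, ∫⁻ t, h x ^ (p - 1) * F x t ∂ν ∂μ :=
        lintegral_congr fun x => (lintegral_const_mul _ hF.of_uncurry_left).symm
    _ = ∫⁻ t, ∫⁻ x, h x ^ (p - 1) * F x t ∂μ ∂ν :=
        lintegral_lintegral_swap (((hh.comp measurable_fst).pow_const _).mul hF).aemeasurable
    _ ≤ ∫⁻ t, (∫⁻ x, h x ^ p ∂μ) ^ (1 / q) * (∫⁻ x, F x t ^ p ∂μ) ^ (1 / p) ∂ν := by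
        refine lintegral_mono fun t => ?_
        simpa only [hconj, Pi.mul_apply] using ENNReal.lintegral_mul_le_Lp_mul_Lq μ hpq.symm
          (hh.pow_const (p - 1)).aemeasurable (hF.of_uncurry_right (y := t)).aemeasurable
    _ = (∫⁻ t, (∫⁻ x, F x t ^ p ∂μ) ^ (1 / p) ∂ν) * (∫⁻ x, h x ^ p ∂μ) ^ (1 / q) := by
        rw [lintegral_const_mul _ hR, mul_comm]

theorem lintegral_Lp_lintegral_le [SigmaFinite μ] [SFinite ν] {F : α → β → ℝ≥0∞}
    (hF : Measurable (Function.uncurry F)) {p : ℝ} (hp : 1 ≤ p) :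
    (∫⁻ x, (∫⁻ t, F x t ∂ν) ^ p ∂μ) ^ (1 / p) ≤ ∫⁻ t, (∫⁻ x, F x t ^ p ∂μ) ^ (1 / p) ∂ν := by
  rcases hp.eq_or_lt with rfl | hp
  · simpa using (lintegral_lintegral_swap hF.aemeasurable).le
  have hpq := Real.HolderConjugate.conjExponent hp
  have hp0 : 0 < p := hpq.pos
  rw [one_div, ENNReal.rpow_inv_le_iff hp0]
  -- Hölder only gives `I ≤ R * I ^ (1 - 1/p)`, which can be divided out when `I < ∞`.
  refine lintegral_le_of_forall_le_of_lintegral_ne_top (hF.lintegral_prod_right'.pow_const p)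
    fun g hg hgle hgfin => ?_
  have hroot x : (g x ^ p⁻¹) ^ p = g x := by
    rw [← ENNReal.rpow_mul, inv_mul_cancel₀ hp0.ne', ENNReal.rpow_one]
  simpa only [hroot, one_div] using lintegral_rpow_le_of_le_lintegral hF hpq (hg.pow_const p⁻¹)
    (fun x => (ENNReal.rpow_inv_le_iff hp0).2 (hgle x)) (by simpa only [hroot] using hgfin)

end Minkowski

theorem ENNReal.lintegral_prod_rpow_le {α ι : Type*} [MeasurableSpace α] {μ : Measure α}
    (s : Finset ι) {f : ι → α → ℝ≥0∞} (hf : ∀ i ∈ s, AEMeasurable (f i) μ) {p : ι → ℝ}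
    {q : ℝ} (hq : 0 < q) (hp : ∀ i ∈ s, 0 < p i) (hpq : ∑ i ∈ s, 1 / p i = 1 / q) :
    (∫⁻ a, (∏ i ∈ s, f i a) ^ q ∂μ) ^ (1 / q) ≤ ∏ i ∈ s, (∫⁻ a, f i a ^ p i ∂μ) ^ (1 / p i) := by
  have hweights : ∑ i ∈ s, q / p i = 1 := by
    simp_rw [div_eq_mul_one_div q]
    rw [← Finset.mul_sum, hpq, mul_one_div_cancel hq.ne']
  have hpow a : (∏ i ∈ s, f i a) ^ q = ∏ i ∈ s, (f i a ^ p i) ^ (q / p i) := by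
    rw [← ENNReal.prod_rpow_of_nonneg hq.le]
    refine Finset.prod_congr rfl fun i hi => ?_
    rw [← ENNReal.rpow_mul, mul_div_cancel₀ q (hp i hi).ne']
  have hroot (i : ι) (hi : i ∈ s) (X : ℝ≥0∞) : (X ^ (q / p i)) ^ (1 / q) = X ^ (1 / p i) := by
    rw [← ENNReal.rpow_mul, div_mul_div_comm, mul_one, mul_comm, ← div_div, div_self hq.ne']
  calc (∫⁻ a, (∏ i ∈ s, f i a) ^ q ∂μ) ^ (1 / q)
      ≤ (∏ i ∈ s, (∫⁻ a, f i a ^ p i ∂μ) ^ (q / p i)) ^ (1 / q) := by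
        simp_rw [hpow]
        gcongr
        exact ENNReal.lintegral_prod_norm_pow_le s (fun i hi => (hf i hi).pow_const _) hweights
          fun i hi => div_nonneg hq.le (hp i hi).le
    _ = ∏ i ∈ s, (∫⁻ a, f i a ^ p i ∂μ) ^ (1 / p i) := by
        rw [← ENNReal.prod_rpow_of_nonneg (one_div_nonneg.2 hq.le)]
        exact Finset.prod_congr rfl fun i hi => hroot i hi _

theorem enorm_prod {ι 𝕜 : Type*} [SeminormedCommRing 𝕜] [NormMulClass 𝕜] [NormOneClass 𝕜]
    (s : Finset ι) (f : ι → 𝕜) : ‖∏ i ∈ s, f i‖ₑ = ∏ i ∈ s, ‖f i‖ₑ := by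
  simp [enorm_eq_nnnorm, nnnorm_prod]

noncomputable def multilinearOp (m : ℕ) (Q : ℝ → (Fin m → ℝ) → ℝ) (f : Fin m → ℝ → ℝ)
    (x : ℝ) : ℝ :=
  ∫ xs, Q x xs * ∏ j, f j (xs j) ∂(piHalf m)

theorem ae_pos_muHalf : ∀ᵐ x ∂muHalf, 0 < x := ae_restrict_mem measurableSet_Ioi

theorem ae_pos_piHalf (m : ℕ) : ∀ᵐ t ∂(piHalf m), ∀ j, 0 < t j :=
  Filter.eventually_all.2 fun _ => Measure.tendsto_eval_ae_ae.eventually ae_pos_muHalf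

theorem eLpNorm_comp_mul_muHalf {g : ℝ → ℝ} (hg : Measurable g) {c p : ℝ} (hc : 0 < c)
    (hp : 0 < p) :
    eLpNorm (fun x => g (x * c)) (ENNReal.ofReal p) muHalf
      = ENNReal.ofReal (c ^ (-(1 / p))) * eLpNorm g (ENNReal.ofReal p) muHalf := by
  have hp' : ENNReal.ofReal p ≠ 0 := (ENNReal.ofReal_pos.2 hp).ne'
  simp_rw [eLpNorm_eq_eLpNorm' hp' ENNReal.ofReal_ne_top, eLpNorm', ENNReal.toReal_ofReal hp.le,
    mul_comm _ c]
  rw [lintegral_muHalf_comp_mul hc (hg.enorm.pow_const p),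
    ENNReal.mul_rpow_of_nonneg _ _ (one_div_nonneg.2 hp.le),
    ENNReal.ofReal_rpow_of_pos (inv_pos.2 hc), Real.inv_rpow hc.le, ← Real.rpow_neg hc.le]

section Kernel

variable {m : ℕ} {Q : ℝ → (Fin m → ℝ) → ℝ} {g : Fin m → ℝ → ℝ}

theorem lintegral_kernel_eq_lintegral_scaled
    (hQmeas : Measurable (fun z : ℝ × (Fin m → ℝ) => Q z.1 z.2))
    (hhom : ∀ δ > (0:ℝ), ∀ x > (0:ℝ), ∀ xs : Fin m → ℝ, (∀ j, 0 < xs j) →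
      Q (δ * x) (fun j => δ * xs j) = δ ^ (-(m:ℝ)) * Q x xs)
    (hg : ∀ j, Measurable (g j)) {x : ℝ} (hx : 0 < x) :
    ∫⁻ xs, ‖Q x xs‖ₑ * ∏ j, ‖g j (xs j)‖ₑ ∂(piHalf m)
      = ∫⁻ t, ‖Q 1 t‖ₑ * ∏ j, ‖g j (x * t j)‖ₑ ∂(piHalf m) := by
  set c := ENNReal.ofReal (x ^ m)⁻¹
  have hc0 : c ≠ 0 := (ENNReal.ofReal_pos.2 (inv_pos.2 (pow_pos hx m))).ne'
  have hmeas : Measurable fun xs : Fin m → ℝ => ‖Q x xs‖ₑ * ∏ j, ‖g j (xs j)‖ₑ :=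
    (hQmeas.comp measurable_prodMk_left).enorm.mul
      (Finset.measurable_prod _ fun j _ => ((hg j).comp (measurable_pi_apply j)).enorm)
  have hscaled : ∫⁻ t, ‖Q x (x • t)‖ₑ * ∏ j, ‖g j ((x • t) j)‖ₑ ∂(piHalf m)
      = c * ∫⁻ t, ‖Q 1 t‖ₑ * ∏ j, ‖g j (x * t j)‖ₑ ∂(piHalf m) := by
    rw [← lintegral_const_mul' _ _ ENNReal.ofReal_ne_top]
    refine lintegral_congr_ae ((ae_pos_piHalf m).mono fun t ht => ?_)
    have hQ : Q x (fun j => x * t j) = x ^ (-(m:ℝ)) * Q 1 t := by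
      simpa only [mul_one] using hhom x hx 1 one_pos t ht
    simp only [Pi.smul_def, smul_eq_mul]
    rw [hQ, enorm_mul, Real.enorm_of_nonneg (Real.rpow_nonneg hx.le _), Real.rpow_neg hx.le,
      Real.rpow_natCast, mul_assoc]
  exact (ENNReal.mul_right_inj hc0 ENNReal.ofReal_ne_top).1
    ((lintegral_piHalf_comp_smul m hx hmeas).symm.trans hscaled)

theorem lintegral_scaled_kernel_rpow_le (hg : ∀ j, Measurable (g j)) {t : Fin m → ℝ}
    (ht : ∀ j, 0 < t j) {p : Fin m → ℝ} {q : ℝ} (hq : 0 < q) (hp : ∀ j, 0 < p j)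
    (hsum : ∑ j, 1 / p j = 1 / q) :
    (∫⁻ x, (‖Q 1 t‖ₑ * ∏ j, ‖g j (x * t j)‖ₑ) ^ q ∂muHalf) ^ (1 / q)
      ≤ ENNReal.ofReal (|Q 1 t| * ∏ j, t j ^ (-(1 / p j)))
        * ∏ j, eLpNorm (g j) (ENNReal.ofReal (p j)) muHalf := by
  have hfactor : (∫⁻ x, (‖Q 1 t‖ₑ * ∏ j, ‖g j (x * t j)‖ₑ) ^ q ∂muHalf) ^ (1 / q)
      = ‖Q 1 t‖ₑ * (∫⁻ x, (∏ j, ‖g j (x * t j)‖ₑ) ^ q ∂muHalf) ^ (1 / q) := by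
    simp_rw [ENNReal.mul_rpow_of_nonneg _ _ hq.le]
    rw [lintegral_const_mul' _ _ (ENNReal.rpow_ne_top_of_nonneg hq.le enorm_ne_top),
      ENNReal.mul_rpow_of_nonneg _ _ (one_div_nonneg.2 hq.le), ← ENNReal.rpow_mul,
      mul_one_div_cancel hq.ne', ENNReal.rpow_one]
  have hnorm j : (∫⁻ x, ‖g j (x * t j)‖ₑ ^ p j ∂muHalf) ^ (1 / p j)
      = ENNReal.ofReal (t j ^ (-(1 / p j))) * eLpNorm (g j) (ENNReal.ofReal (p j)) muHalf := by
    rw [← eLpNorm_comp_mul_muHalf (hg j) (ht j) (hp j),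
      eLpNorm_eq_eLpNorm' (ENNReal.ofReal_pos.2 (hp j)).ne' ENNReal.ofReal_ne_top,
      ENNReal.toReal_ofReal (hp j).le, eLpNorm']
  calc (∫⁻ x, (‖Q 1 t‖ₑ * ∏ j, ‖g j (x * t j)‖ₑ) ^ q ∂muHalf) ^ (1 / q)
      = ‖Q 1 t‖ₑ * (∫⁻ x, (∏ j, ‖g j (x * t j)‖ₑ) ^ q ∂muHalf) ^ (1 / q) := hfactor
    _ ≤ ‖Q 1 t‖ₑ * ∏ j, (∫⁻ x, ‖g j (x * t j)‖ₑ ^ p j ∂muHalf) ^ (1 / p j) := by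
        gcongr
        exact ENNReal.lintegral_prod_rpow_le _
          (fun j _ => ((hg j).comp (measurable_id.mul_const (t j))).enorm.aemeasurable) hq
          (fun j _ => hp j) hsum
    _ = ENNReal.ofReal (|Q 1 t| * ∏ j, t j ^ (-(1 / p j)))
        * ∏ j, eLpNorm (g j) (ENNReal.ofReal (p j)) muHalf := by
        simp_rw [hnorm]
        rw [Finset.prod_mul_distrib, ENNReal.ofReal_mul (abs_nonneg _), ← Real.enorm_eq_ofReal_abs,
          ENNReal.ofReal_prod_of_nonneg fun j _ => Real.rpow_nonneg (ht j).le _, mul_assoc]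

theorem eLpNorm_multilinearOp_le
    (hQmeas : Measurable (fun z : ℝ × (Fin m → ℝ) => Q z.1 z.2))
    (hhom : ∀ δ > (0:ℝ), ∀ x > (0:ℝ), ∀ xs : Fin m → ℝ, (∀ j, 0 < xs j) →
      Q (δ * x) (fun j => δ * xs j) = δ ^ (-(m:ℝ)) * Q x xs)
    (hg : ∀ j, Measurable (g j)) {q : ℝ} (hq : 1 ≤ q) {p : Fin m → ℝ} (hp : ∀ j, 0 < p j)
    (hsum : ∑ j, 1 / p j = 1 / q) :
    eLpNorm (multilinearOp m Q g) (ENNReal.ofReal q) muHalf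
      ≤ Theta m Q p * ∏ j, eLpNorm (g j) (ENNReal.ofReal (p j)) muHalf := by
  have hq0 : 0 < q := zero_lt_one.trans_le hq
  set H : ℝ → (Fin m → ℝ) → ℝ≥0∞ := fun x t => ‖Q 1 t‖ₑ * ∏ j, ‖g j (x * t j)‖ₑ
  have hH : Measurable (Function.uncurry H) :=
    (hQmeas.comp (measurable_const.prodMk measurable_snd)).enorm.mul
      (Finset.measurable_prod _ fun j _ => ((hg j).comp
        (measurable_fst.mul ((measurable_pi_apply j).comp measurable_snd))).enorm)
  have hpointwise : ∀ᵐ x ∂muHalf, ‖multilinearOp m Q g x‖ₑ ^ q ≤ (∫⁻ t, H x t ∂(piHalf m)) ^ q :=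
    ae_pos_muHalf.mono fun x hx => by
      gcongr
      refine (enorm_integral_le_lintegral_enorm _).trans_eq ?_
      simp only [enorm_mul, enorm_prod]
      exact lintegral_kernel_eq_lintegral_scaled hQmeas hhom hg hx
  have hweight : Measurable fun t : Fin m → ℝ =>
      ENNReal.ofReal (|Q 1 t| * ∏ j, t j ^ (-(1 / p j))) :=
    ((hQmeas.comp measurable_prodMk_left).abs.mul
      (Finset.measurable_prod _ fun j _ => (measurable_pi_apply j).pow_const _)).ennreal_ofReal
  calc eLpNorm (multilinearOp m Q g) (ENNReal.ofReal q) muHalf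
      = (∫⁻ x, ‖multilinearOp m Q g x‖ₑ ^ q ∂muHalf) ^ (1 / q) := by
        rw [eLpNorm_eq_eLpNorm' (ENNReal.ofReal_pos.2 hq0).ne' ENNReal.ofReal_ne_top,
          ENNReal.toReal_ofReal hq0.le, eLpNorm']
    _ ≤ (∫⁻ x, (∫⁻ t, H x t ∂(piHalf m)) ^ q ∂muHalf) ^ (1 / q) := by
        gcongr ?_ ^ _
        exact lintegral_mono_ae hpointwise
    _ ≤ ∫⁻ t, (∫⁻ x, H x t ^ q ∂muHalf) ^ (1 / q) ∂(piHalf m) := lintegral_Lp_lintegral_le hH hq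
    _ ≤ ∫⁻ t, ENNReal.ofReal (|Q 1 t| * ∏ j, t j ^ (-(1 / p j)))
          * ∏ j, eLpNorm (g j) (ENNReal.ofReal (p j)) muHalf ∂(piHalf m) :=
        lintegral_mono_ae ((ae_pos_piHalf m).mono fun t ht =>
          lintegral_scaled_kernel_rpow_le hg ht hq0 hp hsum)
    _ = Theta m Q p * ∏ j, eLpNorm (g j) (ENNReal.ofReal (p j)) muHalf := by
        rw [lintegral_mul_const _ hweight, Theta]

end Kernel

theorem multilinearOp_congr_ae {m : ℕ} (Q : ℝ → (Fin m → ℝ) → ℝ) {f g : Fin m → ℝ → ℝ}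
    (h : ∀ j, f j =ᵐ[muHalf] g j) : multilinearOp m Q f = multilinearOp m Q g := by
  funext x
  refine integral_congr_ae ?_
  have hcoord j : ∀ᵐ xs ∂(piHalf m), f j (xs j) = g j (xs j) :=
    (Measure.tendsto_eval_ae_ae (μ := fun _ : Fin m => muHalf) (i := j)).eventually (h j)
  filter_upwards [Filter.eventually_all.2 hcoord] with xs hxs
  simp only [hxs]

theorem eLpNorm_le_mul_grandNorm {Ω : Type*} [MeasurableSpace Ω] {μ : Measure Ω} {a p : ℝ}
    {b : ℝ≥0∞} {ψ : ℝ → ℝ} {f : Ω → ℝ} (hp : a < p ∧ ENNReal.ofReal p < b)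
    (hf : grandNorm μ a b ψ f ≠ ∞) :
    eLpNorm f (ENNReal.ofReal p) μ ≤ ENNReal.ofReal (ψ p) * grandNorm μ a b ψ f := by
  rw [mul_comm, ← ENNReal.div_le_iff_le_mul (Or.inr hf) (Or.inl ENNReal.ofReal_ne_top)]
  exact le_iSup (fun p : {p : ℝ // a < p ∧ ENNReal.ofReal p < b} =>
    eLpNorm f (ENNReal.ofReal p.1) μ / ENNReal.ofReal (ψ p.1)) ⟨p, hp⟩

theorem eLpNorm_multilinearOp_le_betaFun {m : ℕ} {Q : ℝ → (Fin m → ℝ) → ℝ}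
    (hQmeas : Measurable (fun z : ℝ × (Fin m → ℝ) => Q z.1 z.2))
    (hhom : ∀ δ > (0:ℝ), ∀ x > (0:ℝ), ∀ xs : Fin m → ℝ, (∀ j, 0 < xs j) →
      Q (δ * x) (fun j => δ * xs j) = δ ^ (-(m:ℝ)) * Q x xs)
    {a : Fin m → ℝ} {b : Fin m → ℝ≥0∞} (ha : ∀ j, 1 ≤ a j) {ψ : Fin m → ℝ → ℝ}
    {f : Fin m → ℝ → ℝ} (hfm : ∀ j, AEStronglyMeasurable (f j) muHalf)
    (hf : ∀ j, grandNorm muHalf (a j) (b j) (ψ j) (f j) < ∞) {q : ℝ} (hq : 1 ≤ q) :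
    eLpNorm (multilinearOp m Q f) (ENNReal.ofReal q) muHalf ≤ betaFun m Q a b ψ f q := by
  refine le_iInf fun ⟨p, hpab, hsum⟩ => ?_
  have hp j : 0 < p j := zero_lt_one.trans_le (ha j) |>.trans (hpab j).1
  set g : Fin m → ℝ → ℝ := fun j => (hfm j).mk (f j)
  calc eLpNorm (multilinearOp m Q f) (ENNReal.ofReal q) muHalf
      = eLpNorm (multilinearOp m Q g) (ENNReal.ofReal q) muHalf := by
        rw [multilinearOp_congr_ae Q fun j => (hfm j).ae_eq_mk]
    _ ≤ Theta m Q p * ∏ j, eLpNorm (g j) (ENNReal.ofReal (p j)) muHalf :=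
        eLpNorm_multilinearOp_le hQmeas hhom (fun j => (hfm j).stronglyMeasurable_mk.measurable)
          hq hp hsum
    _ = Theta m Q p * ∏ j, eLpNorm (f j) (ENNReal.ofReal (p j)) muHalf := by
        simp_rw [g, eLpNorm_congr_ae (hfm _).ae_eq_mk.symm]
    _ ≤ Theta m Q p * ∏ j,
          ENNReal.ofReal (ψ j (p j)) * grandNorm muHalf (a j) (b j) (ψ j) (f j) := by
        gcongr with j
        exact eLpNorm_le_mul_grandNorm (hpab j) (hf j).ne

theorem stmt11_general (m : ℕ) (Q : ℝ → (Fin m → ℝ) → ℝ)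
    (hQmeas : Measurable (fun z : ℝ × (Fin m → ℝ) => Q z.1 z.2))
    (hhom : ∀ δ > (0:ℝ), ∀ x > (0:ℝ), ∀ xs : Fin m → ℝ, (∀ j, 0 < xs j) →
      Q (δ * x) (fun j => δ * xs j) = δ ^ (-(m:ℝ)) * Q x xs)
    (a : Fin m → ℝ) (b : Fin m → ℝ≥0∞) (ha : ∀ j, 1 ≤ a j)
    (ψ : Fin m → ℝ → ℝ)
    (f : Fin m → ℝ → ℝ) (hfm : ∀ j, AEStronglyMeasurable (f j) muHalf)
    (hf : ∀ j, grandNorm muHalf (a j) (b j) (ψ j) (f j) < ∞) :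
    (∀ q : ℝ, 1 ≤ q → betaFun m Q a b ψ f q < ∞ →
      eLpNorm (fun x => ∫ xs, Q x xs * ∏ j, f j (xs j) ∂(piHalf m))
          (ENNReal.ofReal q) muHalf
        ≤ betaFun m Q a b ψ f q) ∧
    (⨆ q : {q : ℝ // 1 ≤ q ∧ betaFun m Q a b ψ f q < ∞},
        eLpNorm (fun x => ∫ xs, Q x xs * ∏ j, f j (xs j) ∂(piHalf m))
            (ENNReal.ofReal q.1) muHalf / betaFun m Q a b ψ f q.1) ≤ 1 := by
  have hbound q (hq : 1 ≤ q) :=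
    eLpNorm_multilinearOp_le_betaFun hQmeas hhom ha hfm hf hq
  refine ⟨fun q hq _ => hbound q hq, iSup_le fun q => ENNReal.div_le_of_le_mul ?_⟩
  rw [one_mul]
  exact hbound q.1 q.2.1

/-- For every `p ≥ 1` with `β_m(p) < ∞`, `‖M(f⃗)‖_{L^p(ℝ₊)} ≤ β_m(p)`; equivalently the
Grand Lebesgue norm of `M(f⃗)` generated by `β_m` is at most `1`. -/
theorem stmt11 (m : ℕ) (Q : ℝ → (Fin m → ℝ) → ℝ)
    (hQmeas : Measurable (fun z : ℝ × (Fin m → ℝ) => Q z.1 z.2))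
    (hhom : ∀ δ > (0:ℝ), ∀ x > (0:ℝ), ∀ xs : Fin m → ℝ, (∀ j, 0 < xs j) →
      Q (δ * x) (fun j => δ * xs j) = δ ^ (-(m:ℝ)) * Q x xs)
    (a : Fin m → ℝ) (b : Fin m → ℝ≥0∞) (ha : ∀ j, 1 ≤ a j)
    (ψ : Fin m → ℝ → ℝ)
    (hψpos : ∀ j, ∃ c > (0:ℝ), ∀ p, a j < p → (ENNReal.ofReal p) < b j → c ≤ ψ j p)
    (f : Fin m → ℝ → ℝ) (hfm : ∀ j, AEStronglyMeasurable (f j) muHalf)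
    (hf : ∀ j, grandNorm muHalf (a j) (b j) (ψ j) (f j) < ∞) :
    (∀ q : ℝ, 1 ≤ q → betaFun m Q a b ψ f q < ∞ →
      eLpNorm (fun x => ∫ xs, Q x xs * ∏ j, f j (xs j) ∂(piHalf m))
          (ENNReal.ofReal q) muHalf
        ≤ betaFun m Q a b ψ f q) ∧
    (⨆ q : {q : ℝ // 1 ≤ q ∧ betaFun m Q a b ψ f q < ∞},
        eLpNorm (fun x => ∫ xs, Q x xs * ∏ j, f j (xs j) ∂(piHalf m))
            (ENNReal.ofReal q.1) muHalf / betaFun m Q a b ψ f q.1) ≤ 1 :=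
  stmt11_general m Q hQmeas hhom a b ha ψ f hfm hf
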